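/- arXiv:1307.1548 — 5 statements merged into one kernel-verified Lean document; each statement's English description precedes it below -/
import Mathlib

section
/- For integers 0 ≤ k < d-1, the alternating sum ∑_{j=k+1}^{d-1} (-1)^{j-k+1} * (d-j) * C(d,j) equals d * C(d-2,k). -/
/-!
Since `(d - j) * C(d, j) = d * C(d - 1, j)`, the sum is `d` times a tail of the alternating row
sum of `C(d - 1, ·)`. The full row sum vanishes and the partial sums are
`∑_{j ≤ k} (-1)^j C(m + 1, j) = (-1)^k C(m, k)`, so that tail is `±C(d - 2, k)`.
-/

open Finset

theorem Int.alternating_sum_Icc_choose (n k : ℕ) :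
    ∑ j ∈ Icc (k + 1) (n + 1), ((-1) ^ j * (n + 1).choose j : ℤ) =
      (-1) ^ (k + 1) * n.choose k := by
  rcases le_or_gt k (n + 1) with hk | hk
  · have hsplit := sum_range_add_sum_Ico (fun j ↦ ((-1) ^ j * (n + 1).choose j : ℤ))
      (show k + 1 ≤ n + 1 + 1 by omega)
    rw [Int.alternating_sum_range_choose_of_ne n.succ_ne_zero,
      Int.alternating_sum_range_choose_eq_choose, Ico_add_one_right_eq_Icc] at hsplit
    linear_combination hsplit
  · simp [Icc_eq_empty_of_lt (show n + 1 < k + 1 by omega),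
      Nat.choose_eq_zero_of_lt (show n < k by omega)]

theorem neg_one_pow_sub_add_one {R : Type*} [Monoid R] [HasDistribNeg R] {j k : ℕ}
    (h : k ≤ j) : (-1 : R) ^ (j - k + 1) = (-1) ^ (k + 1) * (-1) ^ j := by
  obtain ⟨i, rfl⟩ := Nat.exists_eq_add_of_le h
  rw [Nat.add_sub_cancel_left, ← pow_add, show k + 1 + (k + i) = i + 1 + 2 * k by ring,
    pow_add _ (i + 1), pow_mul, neg_one_sq, one_pow, mul_one]

/-- For integers `0 ≤ k < d-1`, the alternating sum
`∑_{j=k+1}^{d-1} (-1)^{j-k+1} * (d-j) * C(d,j)` equals `d * C(d-2,k)`. -/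
theorem stmt1 (d k : ℕ) (hk : k < d - 1) :
    ∑ j ∈ Finset.Icc (k + 1) (d - 1), (-1 : ℤ) ^ (j - k + 1) * ((d - j : ℕ) : ℤ) * (d.choose j) =
      (d : ℤ) * ((d - 2).choose k : ℤ) := by
  obtain ⟨n, rfl⟩ : ∃ n, d = n + 2 := ⟨d - 2, by omega⟩
  have hterm : ∀ j ∈ Icc (k + 1) (n + 1),
      (-1 : ℤ) ^ (j - k + 1) * ((n + 2 - j : ℕ) : ℤ) * (n + 2).choose j =
        ((n + 2 : ℕ) : ℤ) * (-1) ^ (k + 1) * ((-1) ^ j * (n + 1).choose j) := by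
    intro j hj
    have hchoose : ((n + 1).choose j * (n + 2) : ℤ) = (n + 2).choose j * (n + 2 - j : ℕ) := by
      exact_mod_cast Nat.choose_mul_succ_eq (n + 1) j
    rw [neg_one_pow_sub_add_one (by grind)]
    push_cast at hchoose ⊢
    linear_combination -(-1 : ℤ) ^ (k + 1) * (-1) ^ j * hchoose
  rw [show n + 2 - 1 = n + 1 by omega, show n + 2 - 2 = n by omega, sum_congr rfl hterm,
    ← mul_sum, Int.alternating_sum_Icc_choose, ← mul_assoc, mul_assoc _ _ (_ ^ _), ← pow_add,
    Even.neg_one_pow ⟨k + 1, rfl⟩, mul_one]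
end

section
/- Let P be a graded structure of rank d with h-numbers h_0,...,h_d and suppose h_0 = 1, and the link h-number identity ∑_{v ∈ V} h_{i-1}(lk(v)) = i*h_i + (d-i+1)*h_{i-1} holds for 1 ≤ i ≤ d, where |V| = d and each link satisfies h_j(lk(v)) = C(d-1,j) if j = 0 or j = k and 0 otherwise (for fixed 0 < k < d). Then h_i = 0 for 0 < i ≤ k and h_i = (-1)^{i-k+1} * C(d,i) for k < i ≤ d. -/
/-!
Reindexed, the relation reads `(i+1)·h_{i+1} + (d-i)·h_i = L(i+1)`, a first-order recurrence
that determines `h` from `h_0`. Its homogeneous solutions are the multiples of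
`(-1)^i·C(d,i)`, and `L` vanishes except at `i = 1` and `i = k+1`. At `i = 1` the relation is
`h_1 + d·h_0 = d`, so `h_1 = 0` and `h` stays `0` up to `k`; at `i = k+1` it gives
`h_{k+1} = C(d,k+1)`, from which `h` continues as `±C(d,i)` with alternating signs.
-/

theorem Nat.cast_add_one_mul_choose_succ {K : Type*} [CommRing K] (d i : ℕ) :
    ((i : K) + 1) * d.choose (i + 1) = ((d : K) - i) * d.choose i := by
  rcases le_or_gt i d with hid | hdi
  · have h := congrArg (Nat.cast : ℕ → K) (Nat.choose_succ_right_eq d i)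
    push_cast [Nat.cast_sub hid] at h
    linear_combination h
  · simp [Nat.choose_eq_zero_of_lt hdi, Nat.choose_eq_zero_of_lt (Nat.lt_succ_of_lt hdi)]

theorem eq_mul_neg_one_pow_mul_choose_of_recurrence {K : Type*} [Field K] [CharZero K]
    {d a b : ℕ} {h : ℕ → K} {c : K}
    (hrec : ∀ i, a ≤ i → i < b → ((i : K) + 1) * h (i + 1) + ((d : K) - i) * h i = 0)
    (ha : h a = c * d.choose a) :
    ∀ i, a ≤ i → i ≤ b → h i = c * (-1) ^ (i - a) * d.choose i := by
  intro i hai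
  induction i, hai using Nat.le_induction with
  | base => simp [ha]
  | succ i hai ih =>
    intro hib
    have hi : h i = c * (-1) ^ (i - a) * d.choose i := ih (by omega)
    have hsign : (-1 : K) ^ (i + 1 - a) = -(-1) ^ (i - a) := by
      rw [Nat.sub_add_comm hai, pow_succ, mul_neg_one]
    have hne : (i : K) + 1 ≠ 0 := by exact_mod_cast Nat.succ_ne_zero i
    apply mul_left_cancel₀ hne
    rw [hsign]
    linear_combination hrec i hai (by omega) - ((d : K) - i) * hi
      + c * (-1) ^ (i - a) * Nat.cast_add_one_mul_choose_succ (K := K) d i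

/-- Given `0 < k < d`, a sequence `h` with `h 0 = 1`, satisfying the short simplicial
`h`-vector relation `L(i) = i·h_i + (d-i+1)·h_{i-1}` for `1 ≤ i ≤ d`, where
`L(i) = d·C(d-1,i-1)` if `i-1 ∈ {0,k}` and `L(i) = 0` otherwise, we conclude
`h_i = 0` for `0 < i ≤ k` and `h_i = (-1)^{i-k+1}·C(d,i)` for `k < i ≤ d`. -/
theorem stmt9 (d k : ℕ) (hk : 0 < k) (hkd : k < d) (h : ℕ → ℚ) (h0 : h 0 = 1)
    (hrel : ∀ i, 1 ≤ i → i ≤ d →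
      (if i - 1 = 0 ∨ i - 1 = k then (d : ℚ) * ((d - 1).choose (i - 1) : ℚ) else 0) =
        (i : ℚ) * h i + ((d : ℚ) - (i : ℚ) + 1) * h (i - 1)) :
    (∀ i, 0 < i → i ≤ k → h i = 0) ∧
      (∀ i, k < i → i ≤ d → h i = (-1) ^ (i - k + 1) * (d.choose i : ℚ)) := by
  have hstep : ∀ i, i < d →
      (if i = 0 ∨ i = k then (d : ℚ) * (d - 1).choose i else 0) =
        ((i : ℚ) + 1) * h (i + 1) + ((d : ℚ) - i) * h i := by
    intro i hi
    have := hrel (i + 1) (by omega) (by omega)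
    push_cast [Nat.add_sub_cancel] at this
    linear_combination this
  have hhom : ∀ i, 0 < i → i < d → i ≠ k →
      ((i : ℚ) + 1) * h (i + 1) + ((d : ℚ) - i) * h i = 0 := by
    intro i hi hid hik
    rw [← hstep i hid, if_neg (by omega)]
  have h1 : h 1 = 0 := by
    have := hstep 0 (by omega)
    simp only [true_or, if_true, Nat.choose_zero_right, h0] at this
    push_cast at this
    linarith
  have hzero := eq_mul_neg_one_pow_mul_choose_of_recurrence (a := 1) (b := k) (c := 0)
    (fun i hi hik => hhom i hi (by omega) (by omega)) (by simp [h1])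
  have hk1 : h (k + 1) = 1 * d.choose (k + 1) := by
    have hjump := hstep k hkd
    rw [if_pos (Or.inr rfl), hzero k hk le_rfl] at hjump
    have hchoose := congrArg (Nat.cast : ℕ → ℚ) (Nat.add_one_mul_choose_eq (d - 1) k)
    rw [Nat.sub_add_cancel (by omega : 1 ≤ d)] at hchoose
    push_cast at hchoose
    have hne : (k : ℚ) + 1 ≠ 0 := by positivity
    apply mul_left_cancel₀ hne
    linear_combination hjump.symm + hchoose
  have htail := eq_mul_neg_one_pow_mul_choose_of_recurrence (a := k + 1) (b := d)
    (fun i hi hid => hhom i (by omega) hid (by omega)) hk1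
  refine ⟨fun i hi hik => by simpa using hzero i hi hik, fun i hki hid => ?_⟩
  rw [htail i hki hid, show i - k + 1 = i - (k + 1) + 2 by omega, pow_add]
  ring
end

section
/- Let d > k > 0 be integers and suppose (h'_0,...,h'_d) and (β_0,...,β_{d-1}) are sequences of nonnegative integers satisfying: h'_j = h_j + C(d,j)*∑_{i=0}^{j-1}(-1)^{j-i-1}*β_{i-1} (with β_{-1}=0) where h_0=1, h_i=0 for 0<i≤k, h_i=(-1)^{i-k+1}*C(d,i) for k<i≤d; and h'_j ≥ C(d,j)*β_{j-1} for 1 ≤ j ≤ d-1; and h'_d = β_{d-1}. Then β_i = 1 if i = k and 0 otherwise, and h'_j = C(d,j) if j ∈ {0, k+1} and 0 otherwise. -/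
/-!
Write `S_j` for the alternating sum of Betti numbers in the formula for `h'_j`, so that
`h'_j = h_j + C(d,j) S_j` and `S_{j+2} = β_j - S_{j+1}`. By strong induction on `i`, once
`β` is known below `i` the value `h'_{i+1}` is known: it vanishes for `i ≠ k`, because for
`i > k` the alternating sign of `h_{i+1}` cancels `S_{i+1} = ±1`, and `h'_{k+1} = C(d,k+1)`.
The Novik–Swartz inequality `C(d,i+1) β_i ≤ h'_{i+1}` then gives `β_i = 0` for `i ≠ k` and
`β_k ≤ 1`, while `0 ≤ h'_{k+2} = C(d,k+2) (β_k - 1)` (or `β_{d-1} = h'_d` when `k = d - 1`)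
gives `β_k ≥ 1`.
-/

open Finset

namespace NovikSwartz

/-- The alternating sum `∑_{i=0}^{j-1} (-1)^{j-i-1} β_{i-1}` (with `β_{-1} = 0`), reindexed by
`m = i - 1`. -/
def altSum (β : ℕ → ℤ) (j : ℕ) : ℤ :=
  ∑ m ∈ range (j - 1), (-1 : ℤ) ^ (j - (m + 1) - 1) * β m

theorem altSum_one (β : ℕ → ℤ) : altSum β 1 = 0 := by
  simp [altSum]

theorem altSum_add_two (β : ℕ → ℤ) (j : ℕ) :
    altSum β (j + 2) = β j - altSum β (j + 1) := by
  have hsign : ∀ m ∈ range j, (-1 : ℤ) ^ (j + 2 - (m + 1) - 1) * β m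
      = -((-1 : ℤ) ^ (j + 1 - (m + 1) - 1) * β m) := by
    intro m hm
    rw [show j + 2 - (m + 1) - 1 = (j + 1 - (m + 1) - 1) + 1 by simp at hm; omega, pow_succ]
    ring
  rw [altSum, altSum, show j + 2 - 1 = j + 1 by omega, sum_range_succ, sum_congr rfl hsign,
    sum_neg_distrib, show j + 1 - 1 = j by omega, show j + 2 - (j + 1) - 1 = 0 by omega]
  ring

theorem altSum_succ_of_eq_ite {β : ℕ → ℤ} {k : ℕ} :
    ∀ j, (∀ m < j, β m = if m = k then 1 else 0) →
      altSum β (j + 1) = if k < j then (-1) ^ (j - k - 1) else 0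
  | 0, _ => by simp [altSum_one]
  | j + 1, hβ => by
    rw [altSum_add_two, altSum_succ_of_eq_ite j fun m hm => hβ m (by omega), hβ j (by omega)]
    rcases lt_trichotomy j k with hjk | rfl | hjk
    · simp [hjk.ne, hjk.not_gt, show ¬k < j + 1 by omega]
    · simp
    · rw [if_neg hjk.ne', if_pos hjk, if_pos (by omega),
        show j + 1 - k - 1 = (j - k - 1) + 1 by omega, pow_succ]
      ring

theorem hPrime_succ_eq_ite {d k j : ℕ} {h h' β : ℕ → ℤ}
    (hh1 : ∀ i, 0 < i → i ≤ k → h i = 0)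
    (hh2 : ∀ i, k < i → i ≤ d → h i = (-1) ^ (i - k + 1) * (d.choose i : ℤ))
    (hdef : ∀ j, j ≤ d → h' j = h j + (d.choose j : ℤ) * altSum β j)
    (hjd : j + 1 ≤ d) (hβ : ∀ m < j, β m = if m = k then 1 else 0) :
    h' (j + 1) = if j = k then (d.choose (j + 1) : ℤ) else 0 := by
  rw [hdef (j + 1) hjd, altSum_succ_of_eq_ite j hβ]
  rcases lt_trichotomy j k with hjk | rfl | hjk
  · simp [hh1 (j + 1) (by omega) hjk, hjk.ne, hjk.not_gt]
  · simp [hh2 (j + 1) (by omega) hjd]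
  · rw [hh2 (j + 1) (by omega) hjd, if_pos hjk, if_neg hjk.ne',
      show j + 1 - k + 1 = (j - k - 1) + 3 by omega, pow_add]
    ring

theorem choose_mul_le_hPrime {d i : ℕ} {h' β : ℕ → ℤ}
    (hineq : ∀ j, 1 ≤ j → j ≤ d - 1 → (d.choose j : ℤ) * β (j - 1) ≤ h' j)
    (hlast : h' d = β (d - 1)) (hid : i < d) :
    (d.choose (i + 1) : ℤ) * β i ≤ h' (i + 1) := by
  rcases (Nat.succ_le_of_lt hid).lt_or_eq with hi | hi
  · exact hineq (i + 1) (by omega) (by omega)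
  · subst hi
    simp [hlast]

theorem betti_eq_ite_of_forall_lt {d k i : ℕ} {h h' β : ℕ → ℤ}
    (hh1 : ∀ i, 0 < i → i ≤ k → h i = 0)
    (hh2 : ∀ i, k < i → i ≤ d → h i = (-1) ^ (i - k + 1) * (d.choose i : ℤ))
    (hβnn : ∀ i, 0 ≤ β i) (hh'nn : ∀ j, 0 ≤ h' j)
    (hdef : ∀ j, j ≤ d → h' j = h j + (d.choose j : ℤ) * altSum β j)
    (hineq : ∀ j, 1 ≤ j → j ≤ d - 1 → (d.choose j : ℤ) * β (j - 1) ≤ h' j)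
    (hlast : h' d = β (d - 1)) (hid : i < d)
    (hβ : ∀ m < i, β m = if m = k then 1 else 0) :
    β i = if i = k then 1 else 0 := by
  have hchoose : (0 : ℤ) < d.choose (i + 1) := mod_cast Nat.choose_pos hid
  have hupper := choose_mul_le_hPrime hineq hlast hid
  rw [hPrime_succ_eq_ite hh1 hh2 hdef hid hβ] at hupper
  split_ifs at hupper ⊢ with hik
  · subst hik
    have hlower : 1 ≤ β i := by
      rcases (Nat.succ_le_of_lt hid).lt_or_eq with hi | hi
      · have hnonneg := hh'nn (i + 2)
        rw [hdef (i + 2) hi, altSum_add_two, altSum_succ_of_eq_ite i hβ,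
          hh2 (i + 2) (by omega) hi, show i + 2 - i + 1 = 3 by omega] at hnonneg
        have : (0 : ℤ) < d.choose (i + 2) := mod_cast Nat.choose_pos hi
        simp only [lt_irrefl, if_false, sub_zero] at hnonneg
        nlinarith
      · rw [← hi, show i + 1 - 1 = i by omega,
          hPrime_succ_eq_ite hh1 hh2 hdef hid hβ] at hlast
        simp [← hlast, ← hi]
    nlinarith
  · nlinarith [hβnn i]

end NovikSwartz

open NovikSwartz in
theorem stmt10_general (d k : ℕ)
    (h h' β : ℕ → ℤ)
    (hh0 : h 0 = 1) (hh1 : ∀ i, 0 < i → i ≤ k → h i = 0)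
    (hh2 : ∀ i, k < i → i ≤ d → h i = (-1) ^ (i - k + 1) * (d.choose i : ℤ))
    (hβnn : ∀ i, 0 ≤ β i) (hh'nn : ∀ j, 0 ≤ h' j)
    (hdef : ∀ j, j ≤ d →
      h' j = h j + (d.choose j : ℤ) *
        ∑ m ∈ Finset.range (j - 1), (-1 : ℤ) ^ (j - (m + 1) - 1) * β m)
    (hineq : ∀ j, 1 ≤ j → j ≤ d - 1 → (d.choose j : ℤ) * β (j - 1) ≤ h' j)
    (hlast : h' d = β (d - 1)) :
    (∀ i, i < d → β i = if i = k then 1 else 0) ∧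
      (∀ j, j ≤ d → h' j = if j = 0 ∨ j = k + 1 then (d.choose j : ℤ) else 0) := by
  have hdef' : ∀ j, j ≤ d → h' j = h j + (d.choose j : ℤ) * altSum β j := hdef
  have hβ : ∀ i, i < d → β i = if i = k then 1 else 0 := by
    intro i
    induction i using Nat.strong_induction_on with
    | _ i ih =>
      intro hid
      exact betti_eq_ite_of_forall_lt hh1 hh2 hβnn hh'nn hdef' hineq hlast hid
        fun m hm => ih m hm (hm.trans hid)
  refine ⟨hβ, ?_⟩
  rintro (_ | j) hjd
  · simp [hdef' 0 (Nat.zero_le d), hh0, altSum]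
  · rw [hPrime_succ_eq_ite hh1 hh2 hdef' hjd fun m hm => hβ m (by omega)]
    simp

/-- Abstract version of Lemma 3.1: the Novik–Swartz inequalities
`h'_j ≥ C(d,j)·β_{j-1}` combined with the prescribed `h`-vector force
the Betti numbers and `h'`-numbers of `X(k,d)`. -/
theorem stmt10 (d k : ℕ) (hk : 0 < k) (hkd : k < d)
    (h h' β : ℕ → ℤ)
    (hh0 : h 0 = 1) (hh1 : ∀ i, 0 < i → i ≤ k → h i = 0)
    (hh2 : ∀ i, k < i → i ≤ d → h i = (-1) ^ (i - k + 1) * (d.choose i : ℤ))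
    (hβnn : ∀ i, 0 ≤ β i) (hh'nn : ∀ j, 0 ≤ h' j)
    (hdef : ∀ j, j ≤ d →
      h' j = h j + (d.choose j : ℤ) *
        ∑ m ∈ Finset.range (j - 1), (-1 : ℤ) ^ (j - (m + 1) - 1) * β m)
    (hineq : ∀ j, 1 ≤ j → j ≤ d - 1 → (d.choose j : ℤ) * β (j - 1) ≤ h' j)
    (hlast : h' d = β (d - 1)) :
    (∀ i, i < d → β i = if i = k then 1 else 0) ∧
      (∀ j, j ≤ d → h' j = if j = 0 ∨ j = k + 1 then (d.choose j : ℤ) else 0) :=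
  stmt10_general d k h h' β hh0 hh1 hh2 hβnn hh'nn hdef hineq hlast
end

section
/- For positive integers k < d and any color c ∈ {1,...,d}, the graph G(k,d) with all edges labeled c removed is connected: every vertex w ∈ W_d(k) is connected to α by a path avoiding edges colored c. -/
/-- Flipping the letters in the interval `[a, b)` toggles the descent indicators
exactly at positions `a` and `b`. -/
lemma flip_desc (w : ℕ → Bool) (a b m : ℕ) (ha : 2 ≤ a) (hab : a < b) (hm : 2 ≤ m) :
    ((if a ≤ m ∧ m < b then !w m else w m) ≠
      (if a ≤ m - 1 ∧ m - 1 < b then !w (m-1) else w (m-1))) ↔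
      (if m = a ∨ m = b then w m = w (m-1) else w m ≠ w (m-1)) := by
  rcases lt_trichotomy m a with h | rfl | h
  · rw [if_neg (by omega), if_neg (by omega), if_neg (by omega)]
  · rw [if_pos (by omega : m ≤ m ∧ m < b), if_neg (by omega), if_pos (Or.inl rfl)]
    cases w m <;> cases w (m-1) <;> simp
  · rcases lt_trichotomy m b with h2 | rfl | h2
    · rw [if_pos (by omega), if_pos (by omega), if_neg (by omega)]
      cases w m <;> cases w (m-1) <;> simp
    · rw [if_neg (by omega), if_pos (by omega), if_pos (Or.inr rfl)]
      cases w m <;> cases w (m-1) <;> simp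
    · rw [if_neg (by omega), if_neg (by omega), if_neg (by omega)]

/-- A binary word of length `d` (positions `1,…,d`) with first letter `1`
and exactly `k+1` blocks, i.e. a vertex of `W_d(k)`. -/
def IsWord (d k : ℕ) (w : ℕ → Bool) : Prop :=
  w 1 = true ∧ 1 + ((Finset.Icc 2 d).filter (fun i => w i ≠ w (i - 1))).card = k + 1

/-- For positive integers `k < d` and any color `c ∈ {1,…,d}`, every vertex
`w ∈ W_d(k)` of `G(k,d)` is connected to the apex `α` by a path avoiding edges colored
`c`: there is a sequence of flips, none in position `c`, staying in `W_d(k)`, after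
which some position `j ≠ c` forms a block of size one (giving an edge to `α` labeled
`j`). -/
theorem stmt14 (d k c : ℕ) (hk : 0 < k) (hkd : k < d) (hc1 : 1 ≤ c) (hcd : c ≤ d)
    (w : ℕ → Bool) (hw : IsWord d k w) :
    ∃ (n : ℕ) (p : ℕ → ℕ → Bool), p 0 = w ∧ (∀ i ≤ n, IsWord d k (p i)) ∧
      (∀ i < n, ∃ j ∈ Finset.Icc 1 d, j ≠ c ∧ p i j ≠ p (i + 1) j ∧
        ∀ m ∈ Finset.Icc 1 d, m ≠ j → p i m = p (i + 1) m) ∧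
      (∃ j ∈ Finset.Icc 1 d, j ≠ c ∧ (j = 1 ∨ p n j ≠ p n (j - 1)) ∧
        (j = d ∨ p n j ≠ p n (j + 1))) := by
  obtain ⟨hw1, hw2⟩ := hw
  set D := (Finset.Icc 2 d).filter (fun i => w i ≠ w (i - 1)) with hDdef
  have hDcard : D.card = k := by omega
  have hne : D.Nonempty := Finset.card_pos.mp (by omega)
  have hmemD : ∀ m, m ∈ D ↔ (2 ≤ m ∧ m ≤ d ∧ w m ≠ w (m-1)) := by
    intro m
    rw [hDdef, Finset.mem_filter, Finset.mem_Icc]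
    tauto
  have hd2 : 2 ≤ d := by omega
  by_cases hcase : c < D.max' hne
  · -- Case A: some descent lies beyond `c`; push the rightmost descent to `d`.
    set q := D.max' hne with hqdef
    have hqD : q ∈ D := D.max'_mem hne
    obtain ⟨hq2, hqd, hqdesc⟩ := (hmemD q).mp hqD
    have hqmax : ∀ m ∈ D, m ≤ q := fun m hm => D.le_max' m hm
    set p : ℕ → ℕ → Bool := fun i j => if q ≤ j ∧ j < q + i then !(w j) else w j with hpdef
    have hp : ∀ i j, p i j = if q ≤ j ∧ j < q + i then !(w j) else w j := fun _ _ => rfl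
    have key : ∀ i, i ≤ d - q →
        (Finset.Icc 2 d).filter (fun m => p i m ≠ p i (m - 1)) = insert (q + i) (D.erase q) := by
      intro i hi
      rcases Nat.eq_zero_or_pos i with rfl | hipos
      · have h0 : (Finset.Icc 2 d).filter (fun m => p 0 m ≠ p 0 (m - 1)) = D := by
          rw [hDdef]
          apply Finset.filter_congr
          intro m hm
          rw [hp, hp, if_neg (by omega), if_neg (by omega)]
        rw [h0, Nat.add_zero, Finset.insert_erase hqD]
      · ext m
        simp only [Finset.mem_filter, Finset.mem_Icc, Finset.mem_insert, Finset.mem_erase]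
        constructor
        · rintro ⟨⟨hm2, hmd⟩, hflip⟩
          rw [hp, hp, flip_desc w q (q+i) m hq2 (by omega) hm2] at hflip
          by_cases hqi : m = q + i
          · exact Or.inl hqi
          · by_cases hmq : m = q
            · rw [if_pos (Or.inl hmq)] at hflip
              subst hmq
              exact absurd hflip hqdesc
            · rw [if_neg (by omega)] at hflip
              exact Or.inr ⟨hmq, (hmemD m).mpr ⟨hm2, hmd, hflip⟩⟩
        · intro h
          have hbound : 2 ≤ m ∧ m ≤ d := by
            rcases h with rfl | ⟨_, hm⟩
            · omega
            · have := (hmemD m).mp hm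
              omega
          refine ⟨⟨hbound.1, hbound.2⟩, ?_⟩
          rw [hp, hp, flip_desc w q (q+i) m hq2 (by omega) hbound.1]
          rcases h with rfl | ⟨hmq, hm⟩
          · rw [if_pos (Or.inr rfl)]
            by_contra hne'
            have hmem' : q + i ∈ D := (hmemD _).mpr ⟨by omega, by omega, hne'⟩
            have := hqmax _ hmem'
            omega
          · have hmqi : m ≠ q + i := by
              have := hqmax m hm
              omega
            rw [if_neg (by omega)]
            exact ((hmemD m).mp hm).2.2
    refine ⟨d - q, p, ?_, ?_, ?_, ?_⟩
    · funext j
      rw [hp, if_neg (by omega)]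
    · intro i hi
      refine ⟨?_, ?_⟩
      · rw [hp, if_neg (by omega)]
        exact hw1
      · rw [key i hi]
        have h1 : q + i ∉ D.erase q := by
          intro hcon
          have h2 := hqmax _ (Finset.mem_of_mem_erase hcon)
          have h3 := Finset.ne_of_mem_erase hcon
          omega
        rw [Finset.card_insert_of_notMem h1, Finset.card_erase_of_mem hqD, hDcard]
        omega
    · intro i hi
      refine ⟨q + i, Finset.mem_Icc.mpr ⟨by omega, by omega⟩, by omega, ?_, ?_⟩
      · rw [hp, hp, if_neg (by omega), if_pos (by omega)]
        cases w (q+i) <;> simp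
      · intro m hm hmj
        rw [hp, hp]
        by_cases h : q ≤ m ∧ m < q + i
        · rw [if_pos h, if_pos (by omega)]
        · rw [if_neg h, if_neg (by omega)]
    · refine ⟨d, Finset.mem_Icc.mpr ⟨by omega, le_rfl⟩, by omega, Or.inr ?_, Or.inl rfl⟩
      have hmem : d ∈ (Finset.Icc 2 d).filter (fun m => p (d-q) m ≠ p (d-q) (m - 1)) := by
        rw [key (d-q) le_rfl]
        exact Finset.mem_insert.mpr (Or.inl (by omega))
      exact (Finset.mem_filter.mp hmem).2
  · -- Case B: all descents are ≤ `c`; push the leftmost descent to `2`.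
    push_neg at hcase
    have hallc : ∀ m ∈ D, m ≤ c := fun m hm => le_trans (D.le_max' m hm) hcase
    set q := D.min' hne with hqdef
    have hqD : q ∈ D := D.min'_mem hne
    obtain ⟨hq2, hqd, hqdesc⟩ := (hmemD q).mp hqD
    have hqc : q ≤ c := hallc q hqD
    have hqmin : ∀ m ∈ D, q ≤ m := fun m hm => D.min'_le m hm
    set p : ℕ → ℕ → Bool := fun i j => if q - i ≤ j ∧ j < q then !(w j) else w j with hpdef
    have hp : ∀ i j, p i j = if q - i ≤ j ∧ j < q then !(w j) else w j := fun _ _ => rfl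
    have key : ∀ i, i ≤ q - 2 →
        (Finset.Icc 2 d).filter (fun m => p i m ≠ p i (m - 1)) = insert (q - i) (D.erase q) := by
      intro i hi
      rcases Nat.eq_zero_or_pos i with rfl | hipos
      · have h0 : (Finset.Icc 2 d).filter (fun m => p 0 m ≠ p 0 (m - 1)) = D := by
          rw [hDdef]
          apply Finset.filter_congr
          intro m hm
          rw [hp, hp, if_neg (by omega), if_neg (by omega)]
        rw [h0, Nat.sub_zero, Finset.insert_erase hqD]
      · ext m
        simp only [Finset.mem_filter, Finset.mem_Icc, Finset.mem_insert, Finset.mem_erase]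
        constructor
        · rintro ⟨⟨hm2, hmd⟩, hflip⟩
          rw [hp, hp, flip_desc w (q-i) q m (by omega) (by omega) hm2] at hflip
          by_cases hqi : m = q - i
          · exact Or.inl hqi
          · by_cases hmq : m = q
            · rw [if_pos (Or.inr hmq)] at hflip
              subst hmq
              exact absurd hflip hqdesc
            · rw [if_neg (by omega)] at hflip
              exact Or.inr ⟨hmq, (hmemD m).mpr ⟨hm2, hmd, hflip⟩⟩
        · intro h
          have hbound : 2 ≤ m ∧ m ≤ d := by
            rcases h with rfl | ⟨_, hm⟩
            · omega
            · have := (hmemD m).mp hm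
              omega
          refine ⟨⟨hbound.1, hbound.2⟩, ?_⟩
          rw [hp, hp, flip_desc w (q-i) q m (by omega) (by omega) hbound.1]
          rcases h with rfl | ⟨hmq, hm⟩
          · rw [if_pos (Or.inl rfl)]
            by_contra hne'
            have hmem' : q - i ∈ D := (hmemD _).mpr ⟨by omega, by omega, hne'⟩
            have := hqmin _ hmem'
            omega
          · have hmqi : m ≠ q - i := by
              have := hqmin m hm
              omega
            rw [if_neg (by omega)]
            exact ((hmemD m).mp hm).2.2
    refine ⟨q - 2, p, ?_, ?_, ?_, ?_⟩
    · funext j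
      rw [hp, if_neg (by omega)]
    · intro i hi
      refine ⟨?_, ?_⟩
      · rw [hp, if_neg (by omega)]
        exact hw1
      · rw [key i hi]
        have h1 : q - i ∉ D.erase q := by
          intro hcon
          have h2 := hqmin _ (Finset.mem_of_mem_erase hcon)
          have h3 := Finset.ne_of_mem_erase hcon
          omega
        rw [Finset.card_insert_of_notMem h1, Finset.card_erase_of_mem hqD, hDcard]
        omega
    · intro i hi
      refine ⟨q - i - 1, Finset.mem_Icc.mpr ⟨by omega, by omega⟩, by omega, ?_, ?_⟩
      · rw [hp, hp, if_neg (by omega), if_pos (by omega)]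
        cases w (q-i-1) <;> simp
      · intro m hm hmj
        rw [hp, hp]
        by_cases h : q - i ≤ m ∧ m < q
        · rw [if_pos h, if_pos (by omega)]
        · rw [if_neg h, if_neg (by omega)]
    · refine ⟨1, Finset.mem_Icc.mpr ⟨le_rfl, by omega⟩, by omega, Or.inl rfl, Or.inr ?_⟩
      have hmem : 2 ∈ (Finset.Icc 2 d).filter (fun m => p (q-2) m ≠ p (q-2) (m - 1)) := by
        rw [key (q-2) le_rfl]
        exact Finset.mem_insert.mpr (Or.inl (by omega))
      have h2 := (Finset.mem_filter.mp hmem).2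
      simpa using h2.symm
end

section
/- Let G be a finite connected multigraph with edges labeled by colors in {1,...,d}, and define P(G) as the poset of pairs (H,S) with S ⊆ {1,...,d} and H a connected component of the subgraph G_S of edges with labels in S, ordered by (H,S) ≤ (H',S') iff S' ⊆ S and H' ⊆ H. Then P(G) is a simplicial poset of rank d: it has a unique minimal element (G,{1,...,d}), and every interval [(G,{1,...,d}),(H,S)] is isomorphic to the Boolean lattice of subsets of the complement of S. -/
/-- Reachability in the subgraph `G_S` of the edge-labeled multigraph given by `adj`,
keeping only edges whose label lies in `S`. -/
def Reach {V : Type*} {d : ℕ} (adj : Fin d → V → V → Prop) (S : Finset (Fin d)) :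
    V → V → Prop :=
  Relation.ReflTransGen (fun a b => ∃ j ∈ S, adj j a b)

/-- An element of `P(G)`: a pair `(S, H)` with `H` a connected component of `G_S`. -/
def IsElem {V : Type*} {d : ℕ} (adj : Fin d → V → V → Prop)
    (p : Finset (Fin d) × Set V) : Prop :=
  ∃ v : V, p.2 = {u | Reach adj p.1 v u}

/-- The order on `P(G)`: `(S,H) ≤ (S',H')` iff `S' ⊆ S` and `H' ⊆ H`. -/
def LeP {V : Type*} {d : ℕ} (p q : Finset (Fin d) × Set V) : Prop :=
  q.1 ⊆ p.1 ∧ q.2 ⊆ p.2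

/-!
Every element of `P(G)` below `(S, H)` contains a vertex `v` of `H`, and a component of
`G_T` containing `v` is the component of `v`; so the elements below `(S, H)` are exactly
the components of `v` in `G_T` for the label sets `T ⊇ S`. Recording the labels outside
both `S` and `T` reverses inclusion of label sets, and by monotonicity of components in `T`
that is exactly the order of `P(G)`.
-/

section
variable {V : Type*} {d : ℕ} {adj : Fin d → V → V → Prop}

theorem Reach.mono {S T : Finset (Fin d)} (h : S ⊆ T) {u w : V} (hr : Reach adj S u w) :
    Reach adj T u w :=
  Relation.ReflTransGen.mono (fun _ _ ⟨j, hj, hab⟩ => ⟨j, h hj, hab⟩) _ _ hr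

theorem Reach.symm (hsym : ∀ j u v, adj j u v → adj j v u) {S : Finset (Fin d)} {u w : V}
    (hr : Reach adj S u w) : Reach adj S w u :=
  Relation.ReflTransGen.mono (fun _ _ ⟨j, hj, hab⟩ => ⟨j, hj, hsym j _ _ hab⟩) _ _
    (Relation.ReflTransGen.swap _ _ hr)

theorem setOf_reach_eq_of_reach (hsym : ∀ j u v, adj j u v → adj j v u)
    {S : Finset (Fin d)} {v w : V} (h : Reach adj S v w) :
    {u | Reach adj S v u} = {u | Reach adj S w u} :=
  Set.ext fun _ => ⟨(h.symm hsym).trans, h.trans⟩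

theorem LeP.antisymm {p q : Finset (Fin d) × Set V} (hpq : LeP p q) (hqp : LeP q p) :
    p = q :=
  Prod.ext (hqp.1.antisymm hpq.1) (hqp.2.antisymm hpq.2)

theorem IsElem.snd_eq_of_leP (hsym : ∀ j u v, adj j u v → adj j v u)
    {q : Finset (Fin d) × Set V} (hq : IsElem adj q) {S : Finset (Fin d)} {v : V}
    (hle : LeP q (S, {u | Reach adj S v u})) : q.2 = {u | Reach adj q.1 v u} := by
  obtain ⟨w, hw⟩ := hq
  have hv : v ∈ q.2 := hle.2 Relation.ReflTransGen.refl
  rw [hw] at hv ⊢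
  exact setOf_reach_eq_of_reach hsym hv

theorem leP_iff_of_leP (hsym : ∀ j u v, adj j u v → adj j v u) {S : Finset (Fin d)} {v : V}
    {q q' : Finset (Fin d) × Set V} (hq : IsElem adj q) (hq' : IsElem adj q')
    (hle : LeP q (S, {u | Reach adj S v u})) (hle' : LeP q' (S, {u | Reach adj S v u})) :
    LeP q q' ↔ q'.1 ⊆ q.1 := by
  refine ⟨And.left, fun h => ⟨h, ?_⟩⟩
  rw [hq.snd_eq_of_leP hsym hle, hq'.snd_eq_of_leP hsym hle']
  exact fun _ hu => Reach.mono h hu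

def labelsOutside (S T : Finset (Fin d)) : Finset {j : Fin d // j ∉ S} :=
  Finset.univ.filter fun j => j.1 ∉ T

theorem labelsOutside_subset_labelsOutside_iff {S T T' : Finset (Fin d)} (hT : S ⊆ T) :
    labelsOutside S T ⊆ labelsOutside S T' ↔ T' ⊆ T := by
  simp only [labelsOutside, Finset.subset_iff, Finset.mem_filter, Finset.mem_univ, true_and,
    Subtype.forall]
  refine ⟨fun h j hj => ?_, fun h j _ hjT hjT' => hjT (h hjT')⟩
  by_contra hjT
  exact h j (fun hjS => hjT (hT hjS)) hjT hj

theorem labelsOutside_union_compl (S : Finset (Fin d)) (A : Finset {j : Fin d // j ∉ S}) :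
    labelsOutside S (S ∪ Aᶜ.map (Function.Embedding.subtype _)) = A := by
  ext j
  simp [labelsOutside, j.2]

theorem exists_equiv_interval (hsym : ∀ j u v, adj j u v → adj j v u)
    (S : Finset (Fin d)) (v : V) :
    ∃ e : {q : Finset (Fin d) × Set V //
        IsElem adj q ∧ LeP (Finset.univ, Set.univ) q ∧ LeP q (S, {u | Reach adj S v u})} ≃
        Finset {j : Fin d // j ∉ S},
      ∀ a b, LeP a.1 b.1 ↔ e a ⊆ e b := by
  let f (q : {q : Finset (Fin d) × Set V //
      IsElem adj q ∧ LeP (Finset.univ, Set.univ) q ∧ LeP q (S, {u | Reach adj S v u})}) :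
      Finset {j : Fin d // j ∉ S} :=
    labelsOutside S q.1.1
  have hf : ∀ a b, LeP a.1 b.1 ↔ f a ⊆ f b := fun a b => by
    rw [leP_iff_of_leP hsym a.2.1 b.2.1 a.2.2.2 b.2.2.2,
      labelsOutside_subset_labelsOutside_iff a.2.2.2.1]
  have hinj : Function.Injective f := fun a b hab =>
    Subtype.ext (((hf a b).2 hab.le).antisymm ((hf b a).2 hab.ge))
  have hsurj : Function.Surjective f := fun A => by
    let T := S ∪ Aᶜ.map (Function.Embedding.subtype _)
    refine ⟨⟨(T, {u | Reach adj T v u}), ⟨v, rfl⟩, ⟨T.subset_univ, Set.subset_univ _⟩,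
      Finset.subset_union_left, fun _ hu => Reach.mono Finset.subset_union_left hu⟩, ?_⟩
    exact labelsOutside_union_compl S A
  exact ⟨Equiv.ofBijective f ⟨hinj, hsurj⟩, hf⟩

end

theorem stmt16_general (V : Type) (hV : Nonempty V) (d : ℕ)
    (adj : Fin d → V → V → Prop) (hsym : ∀ j u v, adj j u v → adj j v u)
    (hconn : ∀ u v : V, Reach adj Finset.univ u v) :
    IsElem adj (Finset.univ, Set.univ) ∧
      (∀ p, IsElem adj p → LeP (Finset.univ, Set.univ) p) ∧
      (∀ p, IsElem adj p →
        ∃ e : {q : Finset (Fin d) × Set V //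
            IsElem adj q ∧ LeP (Finset.univ, Set.univ) q ∧ LeP q p} ≃
            Finset {j : Fin d // j ∉ p.1},
          ∀ a b, LeP a.1 b.1 ↔ e a ⊆ e b) := by
  obtain ⟨v₀⟩ := hV
  refine ⟨⟨v₀, (Set.eq_univ_of_forall (hconn v₀)).symm⟩,
    fun _ _ => ⟨Finset.subset_univ _, Set.subset_univ _⟩, ?_⟩
  rintro ⟨S, H⟩ ⟨v, hH : H = {u | Reach adj S v u}⟩
  subst hH
  exact exists_equiv_interval hsym S v

/-- For a finite connected edge-labeled multigraph `G` with labels in `{1,…,d}`, the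
poset `P(G)` of pairs `(S, H)`, `H` a connected component of `G_S`, ordered by
`(S,H) ≤ (S',H')` iff `S' ⊆ S` and `H' ⊆ H`, is a simplicial poset of rank `d`:
`(univ, V)` is its unique minimal element, and each interval below an element `p` is
order-isomorphic to the Boolean lattice of subsets of the complement of `p.1`. -/
theorem stmt16 (V : Type) [Fintype V] (hV : Nonempty V) (d : ℕ)
    (adj : Fin d → V → V → Prop) (hsym : ∀ j u v, adj j u v → adj j v u)
    (hconn : ∀ u v : V, Reach adj Finset.univ u v) :
    IsElem adj (Finset.univ, Set.univ) ∧
      (∀ p, IsElem adj p → LeP (Finset.univ, Set.univ) p) ∧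
      (∀ p, IsElem adj p →
        ∃ e : {q : Finset (Fin d) × Set V //
            IsElem adj q ∧ LeP (Finset.univ, Set.univ) q ∧ LeP q p} ≃
            Finset {j : Fin d // j ∉ p.1},
          ∀ a b, LeP a.1 b.1 ↔ e a ⊆ e b) :=
  stmt16_general V hV d adj hsym hconn
end
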